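/- There exist a constant c > 0 and an integer N such that for all n ≥ N, the diameter of the swap graph 𝒢_n is at least c·n/ln(n). In particular, the diameter of 𝒢_n is Ω(n/ln n). -/

import Mathlib

/-- A sequence of length `n`: a function `ℕ → ℤ` injective on positions `1,…,n`. -/
def IsSeq (n : ℕ) (x : ℕ → ℤ) : Prop := Set.InjOn x (Set.Icc 1 n)

/-- Parent-distance table: `fwdPD x i = i - max{ j | 1 ≤ j < i, x j < x i }` if such `j`
exists, `0` otherwise. -/
def fwdPD (x : ℕ → ℤ) (i : ℕ) : ℕ :=
  if h : ((Finset.Ico 1 i).filter (fun j => x j < x i)).Nonempty then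
    i - ((Finset.Ico 1 i).filter (fun j => x j < x i)).max' h
  else 0

/-- Reverse parent-distance table: `revPD n x i = min{ j | i < j ≤ n, x j < x i } - i` if
such `j` exists, `0` otherwise. -/
def revPD (n : ℕ) (x : ℕ → ℤ) (i : ℕ) : ℕ :=
  if h : ((Finset.Ioc i n).filter (fun j => x j < x i)).Nonempty then
    ((Finset.Ioc i n).filter (fun j => x j < x i)).min' h - i
  else 0

/-- The swap `τ(x,i)`: exchanges positions `i` and `i+1`. -/
def swapSeq (x : ℕ → ℤ) (i : ℕ) : ℕ → ℤ :=
  fun j => if j = i then x (i + 1) else if j = i + 1 then x i else x j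

/-- The parent-distance table of a sequence of length `n`, as a function on `Fin n`
(position `k : Fin n` corresponds to index `k+1 ∈ {1,…,n}`). -/
def PDvec (n : ℕ) (x : ℕ → ℤ) : Fin n → ℕ := fun k => fwdPD x (k.1 + 1)

/-- `NGat n x i` is the set of parent-distance tables obtained by a swap at position `i`
(`1 ≤ i ≤ n-1`) from some sequence `z` having the same Cartesian tree (i.e. the same
parent-distance table) as `x`; it is empty for `i` out of range. -/
def NGat (n : ℕ) (x : ℕ → ℤ) (i : ℕ) : Set (Fin n → ℕ) :=
  {P | 1 ≤ i ∧ i + 1 ≤ n ∧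
    ∃ z, IsSeq n z ∧ PDvec n z = PDvec n x ∧ P = PDvec n (swapSeq z i)}

/-- The neighborhood of (the Cartesian tree of) `x` in the swap graph. -/
def NG (n : ℕ) (x : ℕ → ℤ) : Set (Fin n → ℕ) := ⋃ i, NGat n x i

/-- The set of parent-distance tables of sequences of length `n`
(in one-to-one correspondence with Cartesian trees of size `n`). -/
def PDTables (n : ℕ) : Set (Fin n → ℕ) := {P | ∃ x, IsSeq n x ∧ PDvec n x = P}

/-- The swap graph `𝒢ₙ`: vertices are parent-distance tables of sequences of length `n`,
two distinct tables being adjacent iff one is obtained from the other by a swap. -/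
def swapGraph (n : ℕ) : SimpleGraph (PDTables n) :=
  SimpleGraph.fromRel (fun P Q => ∃ x i, IsSeq n x ∧ 1 ≤ i ∧ i + 1 ≤ n ∧
    PDvec n x = P.1 ∧ PDvec n (swapSeq x i) = Q.1)

/-!
The potential `Φ(P) = ∑ₖ log (P k + 1)` changes by at most `3 log n` along an edge of the swap
graph: a swap at `i` does not touch the entries before `i`, moves each of the two swapped
entries within `[0, log n]`, and can only move the entry at a position `p > i + 1` between
`p - i` and `p - i - 1`; these last changes telescope to at most `log n`. The increasing sequence
has `Φ = (n - 1) log 2` and the decreasing one `Φ = 0`, so their distance is at least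
`(n - 1) log 2 / (3 log n)`. Bubble sort connects every table to that of the decreasing sequence,
so the graph is connected and this distance is at most the diameter.
-/

open Finset

lemma swap_apply_mem_iff {α : Type*} [DecidableEq α] {s : Set α} {a b : α} (ha : a ∈ s)
    (hb : b ∈ s) (k : α) : Equiv.swap a b k ∈ s ↔ k ∈ s := by
  rcases eq_or_ne k a with rfl | hka
  · simp [ha, hb]
  rcases eq_or_ne k b with rfl | hkb
  · simp [ha, hb]
  rw [Equiv.swap_apply_of_ne_of_ne hka hkb]

lemma swapSeq_eq_comp (x : ℕ → ℤ) (i : ℕ) : swapSeq x i = x ∘ Equiv.swap i (i + 1) := by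
  funext k
  simp only [swapSeq, Function.comp_apply, Equiv.swap_apply_def]
  split_ifs <;> rfl

lemma IsSeq.swapSeq {n : ℕ} {x : ℕ → ℤ} {i : ℕ} (hx : IsSeq n x) (hi : 1 ≤ i)
    (hin : i + 1 ≤ n) : IsSeq n (swapSeq x i) := by
  rw [IsSeq, swapSeq_eq_comp]
  exact hx.comp (Equiv.injective _).injOn fun k hk =>
    (swap_apply_mem_iff (s := Set.Icc 1 n) ⟨hi, by omega⟩ ⟨by omega, hin⟩ k).mpr hk

lemma eq_of_lt_of_swap_succ_le {i k m : ℕ} (hkm : k < m)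
    (h : Equiv.swap i (i + 1) m ≤ Equiv.swap i (i + 1) k) : k = i ∧ m = i + 1 := by
  simp only [Equiv.swap_apply_def] at h
  split_ifs at h <;> omega

lemma max'_map_swap_succ (S : Finset ℕ) (hS : S.Nonempty) (i : ℕ) :
    (S.map (Equiv.swap i (i + 1)).toEmbedding).max' (hS.map) = S.max' hS ∨
      (S.max' hS = i ∧ (S.map (Equiv.swap i (i + 1)).toEmbedding).max' (hS.map) = i + 1) ∨
      (S.max' hS = i + 1 ∧ (S.map (Equiv.swap i (i + 1)).toEmbedding).max' (hS.map) = i) := by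
  set σ := Equiv.swap i (i + 1) with hσ
  obtain ⟨k, hk, hk'⟩ := mem_map.mp (max'_mem (S.map σ.toEmbedding) hS.map)
  rw [Equiv.coe_toEmbedding] at hk'
  rw [← hk']
  have hσM : σ (S.max' hS) ≤ σ k :=
    hk' ▸ le_max' _ _ (mem_map_of_mem σ.toEmbedding (max'_mem S hS))
  rcases (le_max' S k hk).lt_or_eq with hlt | hkM
  · obtain ⟨rfl, hM⟩ := eq_of_lt_of_swap_succ_le hlt hσM
    left
    rw [hM, hσ, Equiv.swap_apply_left]
  · rw [← hkM, hσ, Equiv.swap_apply_def]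
    split_ifs <;> omega

lemma filter_swapSeq_lt_eq_map (x : ℕ → ℤ) {i p : ℕ} (hi : 1 ≤ i) (hp : i + 1 < p) :
    (Ico 1 p).filter (fun j => swapSeq x i j < swapSeq x i p) =
      ((Ico 1 p).filter (fun j => x j < x p)).map (Equiv.swap i (i + 1)).toEmbedding := by
  ext j
  have hmem := swap_apply_mem_iff (s := Set.Ico 1 p) ⟨hi, by omega⟩ ⟨by omega, hp⟩ j
  rw [Set.mem_Ico, Set.mem_Ico] at hmem
  rw [mem_map_equiv, Equiv.symm_swap, mem_filter, mem_filter, mem_Ico, mem_Ico, hmem,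
    swapSeq_eq_comp, Function.comp_apply, Function.comp_apply,
    Equiv.swap_apply_of_ne_of_ne (show p ≠ i by omega) (show p ≠ i + 1 by omega)]

lemma fwdPD_lt (x : ℕ → ℤ) {p : ℕ} (hp : 1 ≤ p) : fwdPD x p < p := by
  unfold fwdPD
  split_ifs with h
  · have := (mem_filter.mp (max'_mem _ h)).1
    rw [mem_Ico] at this
    omega
  · omega

lemma fwdPD_swapSeq_of_lt (x : ℕ → ℤ) {i p : ℕ} (hp : p < i) :
    fwdPD (swapSeq x i) p = fwdPD x p := by
  have hx : ∀ j ≤ p, swapSeq x i j = x j := fun j hj => by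
    simp only [swapSeq]
    rw [if_neg (by omega), if_neg (by omega)]
  unfold fwdPD
  rw [filter_congr fun j hj => by rw [hx j (mem_Ico.mp hj).2.le, hx p le_rfl]]

lemma fwdPD_swapSeq_of_succ_lt (x : ℕ → ℤ) {i p : ℕ} (hi : 1 ≤ i) (hp : i + 1 < p) :
    fwdPD (swapSeq x i) p = fwdPD x p ∨
      (fwdPD x p = p - i ∧ fwdPD (swapSeq x i) p = p - (i + 1)) ∨
      (fwdPD x p = p - (i + 1) ∧ fwdPD (swapSeq x i) p = p - i) := by
  unfold fwdPD
  rw [filter_swapSeq_lt_eq_map x hi hp]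
  by_cases hS : ((Ico 1 p).filter (fun j => x j < x p)).Nonempty
  · rw [dif_pos hS, dif_pos hS.map]
    rcases max'_map_swap_succ _ hS i with h | ⟨hM, h⟩ | ⟨hM, h⟩
    · exact Or.inl (by rw [h])
    · exact Or.inr (Or.inl ⟨by rw [hM], by rw [h]⟩)
    · exact Or.inr (Or.inr ⟨by rw [hM], by rw [h]⟩)
  · rw [dif_neg hS, dif_neg (by simpa using hS)]
    exact Or.inl rfl

lemma log_fwdPD_add_one_mem_Icc (x : ℕ → ℤ) {n p : ℕ} (hp : 1 ≤ p) (hpn : p ≤ n) :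
    Real.log (fwdPD x p + 1) ∈ Set.Icc 0 (Real.log n) := by
  have hlt := fwdPD_lt x hp
  refine ⟨Real.log_nonneg (by simp), Real.log_le_log (by positivity) ?_⟩
  exact_mod_cast (show fwdPD x p + 1 ≤ n by omega)

lemma abs_log_fwdPD_sub_le (x y : ℕ → ℤ) {n p : ℕ} (hp : 1 ≤ p) (hpn : p ≤ n) :
    |Real.log (fwdPD x p + 1) - Real.log (fwdPD y p + 1)| ≤ Real.log n :=
  (abs_sub_le_of_le_of_le (log_fwdPD_add_one_mem_Icc x hp hpn).1
    (log_fwdPD_add_one_mem_Icc x hp hpn).2 (log_fwdPD_add_one_mem_Icc y hp hpn).1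
    (log_fwdPD_add_one_mem_Icc y hp hpn).2).trans_eq (sub_zero _)

/-- The subtraction `m - i` truncates, so the telescoping term vanishes for `m < i`. -/
lemma abs_log_fwdPD_swapSeq_sub_le (x : ℕ → ℤ) {n i m : ℕ} (hi : 1 ≤ i) (hm : m < n) :
    |Real.log (fwdPD x (m + 1) + 1) - Real.log (fwdPD (swapSeq x i) (m + 1) + 1)| ≤
      (if m = i - 1 then Real.log n else 0) + (if m = i then Real.log n else 0) +
        (Real.log (((m + 1 - i : ℕ) : ℝ) + 1) - Real.log (((m - i : ℕ) : ℝ) + 1)) := by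
  have hL : 0 ≤ Real.log n := Real.log_natCast_nonneg n
  have hstep : Real.log (((m - i : ℕ) : ℝ) + 1) ≤ Real.log (((m + 1 - i : ℕ) : ℝ) + 1) :=
    Real.log_le_log (by positivity) (by gcongr; omega)
  have hind₁ : 0 ≤ if m = i - 1 then Real.log n else 0 := by split_ifs <;> simp [hL]
  have hind₂ : 0 ≤ if m = i then Real.log n else 0 := by split_ifs <;> simp [hL]
  rcases lt_trichotomy (m + 1) i with hlt | heq | hgt
  · rw [fwdPD_swapSeq_of_lt x hlt, sub_self, abs_zero]
    linarith
  · have := abs_log_fwdPD_sub_le x (swapSeq x i) (n := n) (by omega) hm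
    rw [if_pos (show m = i - 1 by omega)]
    linarith
  rcases (Nat.succ_le_of_lt hgt).eq_or_lt with heq | hgt
  · have := abs_log_fwdPD_sub_le x (swapSeq x i) (n := n) (by omega) hm
    rw [if_pos (show m = i by omega)]
    linarith
  rcases fwdPD_swapSeq_of_succ_lt x hi hgt with h | ⟨hx, hy⟩ | ⟨hx, hy⟩
  · rw [h, sub_self, abs_zero]
    linarith
  · rw [hx, hy, Nat.add_sub_add_right, abs_of_nonneg (by linarith)]
    linarith
  · rw [hx, hy, Nat.add_sub_add_right, abs_sub_comm, abs_of_nonneg (by linarith)]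
    linarith

noncomputable def logPotential (n : ℕ) (P : Fin n → ℕ) : ℝ :=
  ∑ k, Real.log (P k + 1)

lemma logPotential_PDvec (n : ℕ) (x : ℕ → ℤ) :
    logPotential n (PDvec n x) = ∑ m ∈ range n, Real.log (fwdPD x (m + 1) + 1) :=
  Fin.sum_univ_eq_sum_range (fun m => Real.log (fwdPD x (m + 1) + 1)) n

lemma abs_logPotential_swapSeq_sub_le (x : ℕ → ℤ) {n i : ℕ} (hi : 1 ≤ i) :
    |logPotential n (PDvec n x) - logPotential n (PDvec n (swapSeq x i))| ≤ 3 * Real.log n := by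
  have hL : 0 ≤ Real.log n := Real.log_natCast_nonneg n
  have htail : Real.log (((n - i : ℕ) : ℝ) + 1) ≤ Real.log n := by
    rcases Nat.eq_zero_or_pos n with rfl | hn
    · simp
    exact Real.log_le_log (by positivity) (by exact_mod_cast (show n - i + 1 ≤ n by omega))
  rw [logPotential_PDvec, logPotential_PDvec, ← sum_sub_distrib]
  calc _ ≤ ∑ m ∈ range n, |Real.log (fwdPD x (m + 1) + 1) -
          Real.log (fwdPD (swapSeq x i) (m + 1) + 1)| := abs_sum_le_sum_abs _ _
    _ ≤ ∑ m ∈ range n, ((if m = i - 1 then Real.log n else 0) +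
          (if m = i then Real.log n else 0) + (Real.log (((m + 1 - i : ℕ) : ℝ) + 1) -
            Real.log (((m - i : ℕ) : ℝ) + 1))) :=
        sum_le_sum fun m hm => abs_log_fwdPD_swapSeq_sub_le x hi (mem_range.mp hm)
    _ ≤ 3 * Real.log n := by
        rw [sum_add_distrib, sum_add_distrib, sum_ite_eq', sum_ite_eq',
          sum_range_sub (fun m => Real.log (((m - i : ℕ) : ℝ) + 1))]
        simp only [Nat.zero_sub, Nat.cast_zero, zero_add, Real.log_one, sub_zero]
        split_ifs <;> linarith

lemma abs_logPotential_sub_le_of_adj {n : ℕ} {P Q : PDTables n} (h : (swapGraph n).Adj P Q) :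
    |logPotential n P - logPotential n Q| ≤ 3 * Real.log n := by
  rw [swapGraph, SimpleGraph.fromRel_adj] at h
  rcases h.2 with ⟨x, i, -, hi, -, hP, hQ⟩ | ⟨x, i, -, hi, -, hQ, hP⟩
  · rw [← hP, ← hQ]
    exact abs_logPotential_swapSeq_sub_le x hi
  · rw [← hP, ← hQ, abs_sub_comm]
    exact abs_logPotential_swapSeq_sub_le x hi

lemma SimpleGraph.Walk.abs_sub_le_length_mul {V : Type*} {G : SimpleGraph V} {f : V → ℝ}
    {L : ℝ} (hf : ∀ a b, G.Adj a b → |f a - f b| ≤ L) {u v : V} (w : G.Walk u v) :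
    |f u - f v| ≤ w.length * L := by
  induction w with
  | nil => simp
  | cons hab _ ih =>
    rw [length_cons, Nat.cast_succ, add_mul, one_mul]
    exact (abs_sub_le _ _ _).trans (by linarith [hf _ _ hab])

lemma SimpleGraph.Reachable.abs_sub_le_dist_mul {V : Type*} {G : SimpleGraph V} {f : V → ℝ}
    {L : ℝ} (hf : ∀ a b, G.Adj a b → |f a - f b| ≤ L) {u v : V} (huv : G.Reachable u v) :
    |f u - f v| ≤ G.dist u v * L := by
  obtain ⟨w, hw⟩ := huv.exists_walk_length_eq_dist
  exact hw ▸ w.abs_sub_le_length_mul hf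

def nonInversions (n : ℕ) (x : ℕ → ℤ) : Finset (ℕ × ℕ) :=
  (Icc 1 n ×ˢ Icc 1 n).filter fun q => q.1 < q.2 ∧ x q.1 < x q.2

lemma PDvec_eq_zero_of_nonInversions_eq_empty {n : ℕ} {x : ℕ → ℤ}
    (h : nonInversions n x = ∅) : PDvec n x = 0 := by
  funext k
  rw [PDvec, fwdPD, dif_neg, Pi.zero_apply]
  rw [not_nonempty_iff_eq_empty, filter_eq_empty_iff]
  intro j hj hlt
  have hmem : (j, k.1 + 1) ∈ nonInversions n x := by
    rw [mem_Ico] at hj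
    simp only [nonInversions, mem_filter, mem_product, mem_Icc]
    exact ⟨⟨⟨hj.1, by omega⟩, by omega, k.2⟩, hj.2, hlt⟩
  simp [h] at hmem

lemma exists_ascent_of_lt {x : ℕ → ℤ} {a b : ℕ} (hab : a ≤ b) (h : x a < x b) :
    ∃ i, a ≤ i ∧ i < b ∧ x i < x (i + 1) := by
  by_contra! hno
  have hanti : AntitoneOn x (Set.Icc a b) :=
    antitoneOn_of_succ_le Set.ordConnected_Icc fun k _ hk hk' =>
      hno k hk.1 (by simpa using hk'.2)
  exact (hanti ⟨le_rfl, hab⟩ ⟨hab, le_rfl⟩ hab).not_gt h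

lemma exists_ascent_of_nonInversions_nonempty {n : ℕ} {x : ℕ → ℤ}
    (h : (nonInversions n x).Nonempty) : ∃ i, 1 ≤ i ∧ i + 1 ≤ n ∧ x i < x (i + 1) := by
  obtain ⟨⟨a, b⟩, hab⟩ := h
  simp only [nonInversions, mem_filter, mem_product, mem_Icc] at hab
  obtain ⟨i, hai, hib, hi⟩ := exists_ascent_of_lt hab.2.1.le hab.2.2
  exact ⟨i, by omega, by omega, hi⟩

lemma card_nonInversions_swapSeq_lt {n : ℕ} {x : ℕ → ℤ} {i : ℕ} (hi : 1 ≤ i)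
    (hin : i + 1 ≤ n) (hasc : x i < x (i + 1)) :
    #(nonInversions n (swapSeq x i)) < #(nonInversions n x) := by
  set σ := Equiv.swap i (i + 1)
  have hmem : (i, i + 1) ∈ nonInversions n x := by
    simp only [nonInversions, mem_filter, mem_product, mem_Icc]
    exact ⟨⟨⟨hi, by omega⟩, by omega, hin⟩, by omega, hasc⟩
  refine lt_of_le_of_lt ?_ (card_erase_lt_of_mem hmem)
  refine card_le_card_of_injOn (Prod.map σ σ) (fun q hq => ?_)
    (Prod.map_injective.mpr ⟨σ.injective, σ.injective⟩).injOn
  simp only [nonInversions, coe_filter, coe_erase, Set.mem_sdiff, Set.mem_ofPred_eq, mem_product,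
    mem_Icc, swapSeq_eq_comp, Function.comp_apply, Prod.map_fst, Prod.map_snd,
    Set.mem_singleton_iff, Prod.ext_iff, σ, Equiv.swap_apply_def] at hq ⊢
  split_ifs at hq ⊢ <;> omega

def IsSeq.toPDTable {n : ℕ} {x : ℕ → ℤ} (hx : IsSeq n x) : PDTables n :=
  ⟨PDvec n x, x, hx, rfl⟩

lemma swapGraph_reachable_swapSeq {n : ℕ} {x : ℕ → ℤ} {i : ℕ} (hx : IsSeq n x)
    (hi : 1 ≤ i) (hin : i + 1 ≤ n) :
    (swapGraph n).Reachable hx.toPDTable (hx.swapSeq hi hin).toPDTable := by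
  by_cases h : PDvec n x = PDvec n (swapSeq x i)
  · rw [show hx.toPDTable = (hx.swapSeq hi hin).toPDTable from Subtype.ext h]
  · refine SimpleGraph.Adj.reachable ((SimpleGraph.fromRel_adj _ _ _).mpr ⟨?_, ?_⟩)
    · exact fun e => h (congrArg Subtype.val e)
    · exact Or.inl ⟨x, i, hx, hi, hin, rfl, rfl⟩

lemma swapGraph_reachable_of_eq_zero {n : ℕ} {x : ℕ → ℤ} (hx : IsSeq n x) (v : PDTables n)
    (hv : v.1 = 0) : (swapGraph n).Reachable hx.toPDTable v := by
  induction h : #(nonInversions n x) using Nat.strong_induction_on generalizing x with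
  | _ k ih =>
  rcases (nonInversions n x).eq_empty_or_nonempty with h0 | hne
  · have hxv : hx.toPDTable = v :=
      Subtype.ext ((PDvec_eq_zero_of_nonInversions_eq_empty h0).trans hv.symm)
    rw [hxv]
  · obtain ⟨i, hi, hin, hasc⟩ := exists_ascent_of_nonInversions_nonempty hne
    exact (swapGraph_reachable_swapSeq hx hi hin).trans
      (ih _ (h ▸ card_nonInversions_swapSeq_lt hi hin hasc) (hx.swapSeq hi hin) rfl)

lemma isSeq_neg (n : ℕ) : IsSeq n fun j => -(j : ℤ) :=
  fun _ _ _ _ h => by simpa using h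

lemma isSeq_natCast (n : ℕ) : IsSeq n fun j => (j : ℤ) :=
  fun _ _ _ _ h => by simpa using h

lemma nonInversions_neg (n : ℕ) : nonInversions n (fun j => -(j : ℤ)) = ∅ :=
  filter_eq_empty_iff.mpr fun _ _ h => by dsimp only at h; omega

def zeroPDTable (n : ℕ) : PDTables n :=
  ⟨0, _, isSeq_neg n, PDvec_eq_zero_of_nonInversions_eq_empty (nonInversions_neg n)⟩

lemma swapGraph_connected (n : ℕ) : (swapGraph n).Connected := by
  have : Nonempty (PDTables n) := ⟨zeroPDTable n⟩
  refine ⟨fun u v => ?_⟩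
  obtain ⟨P, x, hx, rfl⟩ := u
  obtain ⟨Q, y, hy, rfl⟩ := v
  exact (swapGraph_reachable_of_eq_zero hx _ rfl).trans
    (swapGraph_reachable_of_eq_zero hy (zeroPDTable n) rfl).symm

lemma PDTables_finite (n : ℕ) : (PDTables n).Finite := by
  refine (Set.finite_Iic (fun _ : Fin n => n)).subset ?_
  rintro _ ⟨x, -, rfl⟩ k
  exact (fwdPD_lt x (Nat.succ_pos k)).le.trans k.2

lemma fwdPD_one (x : ℕ → ℤ) : fwdPD x 1 = 0 := by
  simp [fwdPD]

lemma fwdPD_eq_one_of_lt (x : ℕ → ℤ) {p : ℕ} (hp : 2 ≤ p) (h : x (p - 1) < x p) :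
    fwdPD x p = 1 := by
  have hmem : p - 1 ∈ (Ico 1 p).filter fun j => x j < x p :=
    mem_filter.mpr ⟨mem_Ico.mpr ⟨by omega, by omega⟩, h⟩
  have hle := le_max' _ _ hmem
  have hlt := (mem_Ico.mp (mem_filter.mp (max'_mem _ ⟨_, hmem⟩)).1).2
  rw [fwdPD, dif_pos ⟨_, hmem⟩]
  omega

lemma logPotential_PDvec_natCast {n : ℕ} (hn : 1 ≤ n) :
    logPotential n (PDvec n fun j => (j : ℤ)) = (n - 1) * Real.log 2 := by
  obtain ⟨k, rfl⟩ := Nat.exists_eq_add_of_le' hn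
  rw [logPotential_PDvec, sum_range_succ']
  have hsucc : ∀ m ∈ range k,
      Real.log (fwdPD (fun j => (j : ℤ)) (m + 1 + 1) + 1) = Real.log 2 := fun m _ => by
    rw [fwdPD_eq_one_of_lt _ (by omega) (by push_cast; omega)]
    norm_num
  rw [sum_congr rfl hsucc, fwdPD_one]
  simp

lemma logPotential_zero (n : ℕ) : logPotential n 0 = 0 := by
  simp [logPotential]

theorem stmt19 :
    ∃ c : ℝ, 0 < c ∧ ∃ N : ℕ, ∀ n : ℕ, N ≤ n →
      c * n / Real.log n ≤ ((swapGraph n).diam : ℝ) := by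
  refine ⟨Real.log 2 / 6, by positivity, 2, fun n hn => ?_⟩
  have : Finite (PDTables n) := (PDTables_finite n).to_subtype
  have hconn := swapGraph_connected n
  have := hconn.nonempty
  have hn' : (2 : ℝ) ≤ n := by exact_mod_cast hn
  have hlog : 0 < Real.log n := Real.log_pos (by linarith)
  have hlog2 : 0 < Real.log 2 := Real.log_pos one_lt_two
  set u := (isSeq_natCast n).toPDTable with hu
  have hdist :
      (n - 1) * Real.log 2 ≤ (swapGraph n).dist u (zeroPDTable n) * (3 * Real.log n) := by
    have := (hconn u (zeroPDTable n)).abs_sub_le_dist_mul fun _ _ => abs_logPotential_sub_le_of_adj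
    rwa [hu, IsSeq.toPDTable, zeroPDTable, logPotential_PDvec_natCast (by omega),
      logPotential_zero, sub_zero, abs_of_nonneg (by nlinarith)] at this
  have hdiam : ((swapGraph n).dist u (zeroPDTable n) : ℝ) ≤ (swapGraph n).diam := by
    exact_mod_cast SimpleGraph.dist_le_diam (SimpleGraph.connected_iff_ediam_ne_top.mp hconn)
  rw [div_le_iff₀ hlog]
  nlinarith [mul_le_mul_of_nonneg_right hdiam (by positivity : (0 : ℝ) ≤ 3 * Real.log n)]
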